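/- There exist constants c_1, c_2 > 0 and N ∈ ℕ such that for every n ≥ N there is a boolean function f : {0,1}^{n²} → {0,1} with bs(f) ≤ bs*(f) ≤ c_1 · n and C(f) ≥ c_2 · n². -/

import Mathlib

/-!
Take a binary linear code `C ⊆ {0,1}ⁿ` whose minimum distance and dual distance both exceed
`t = n / 128`; a random parity-check matrix with `n / 2` rows works. Let `f(x) = 1` iff some row
of the `n × n` matrix `x` lies in `C`.

At an input whose rows all equal one non-codeword, a certificate must fix more than `t` bits of
every row, because any `t` bits of a row extend to a codeword; so `C(f) > n t`. Every input has
a fractional certificate of weight `O(n)`: one row lying in `C` if `f = 1`; otherwise weight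
`2/(t+1)` on every bit plus `1/ρᵢ` on the `ρᵢ` bits where row `i` differs from a nearest codeword.
A block turns some row into a codeword, which is either that nearest one or, by the triangle
inequality, at distance `> t/2` from the row. Hence `bs(f) ≤ bs*(f) = O(n)`.
-/

open Filter

namespace BS

variable {I : Type*} [Fintype I] [DecidableEq I]

/-- Flip the bits of `x` indexed by `B`. -/
def flipSet (x : I → Bool) (B : Finset I) : I → Bool :=
  fun i => if i ∈ B then !(x i) else x i

/-- `B` is a block of `f` at `x`. -/
def IsBlock (f : (I → Bool) → Bool) (x : I → Bool) (B : Finset I) : Prop :=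
  f (flipSet x B) ≠ f x

/-- Block sensitivity of `f` at `x`: the maximum number of pairwise disjoint blocks. -/
noncomputable def bsAt (f : (I → Bool) → Bool) (x : I → Bool) : ℕ :=
  sSup {k | ∃ B : Fin k → Finset I, (∀ t, IsBlock f x (B t)) ∧
    ∀ t t', t ≠ t' → Disjoint (B t) (B t')}

/-- Block sensitivity of `f`. -/
noncomputable def bs (f : (I → Bool) → Bool) : ℕ :=
  sSup {k | ∃ x, k = bsAt f x}

/-- `b`-block sensitivity of `f`. -/
noncomputable def bsb (f : (I → Bool) → Bool) (b : Bool) : ℕ :=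
  sSup {k | ∃ x, f x = b ∧ k = bsAt f x}

/-- `M`-fold block sensitivity of `f` at `x`. -/
noncomputable def bsMAt (f : (I → Bool) → Bool) (M : ℕ) (x : I → Bool) : ℕ :=
  sSup {k | ∃ B : Fin k → Finset I, (∀ t, IsBlock f x (B t)) ∧
    ∀ i : I, (Finset.univ.filter (fun t => i ∈ B t)).card ≤ M}

/-- `M`-fold `b`-block sensitivity of `f`. -/
noncomputable def bsMb (f : (I → Bool) → Bool) (M : ℕ) (b : Bool) : ℕ :=
  sSup {k | ∃ x, f x = b ∧ k = bsMAt f M x}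

/-- Fractional block sensitivity of `f` at `x`. -/
noncomputable def fbsAt (f : (I → Bool) → Bool) (x : I → Bool) : ℝ :=
  sSup {s | ∃ lam : Finset I → ℝ, (∀ B, 0 ≤ lam B) ∧
    (∀ B, ¬ IsBlock f x B → lam B = 0) ∧
    (∀ i : I, ∑ B ∈ Finset.univ.filter (fun B : Finset I => i ∈ B), lam B ≤ 1) ∧
    s = ∑ B : Finset I, lam B}

/-- Fractional block sensitivity of `f`. -/
noncomputable def fbs (f : (I → Bool) → Bool) : ℝ :=
  sSup {s | ∃ x, s = fbsAt f x}

/-- Fractional `b`-block sensitivity of `f`. -/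
noncomputable def fbsb (f : (I → Bool) → Bool) (b : Bool) : ℝ :=
  sSup {s | ∃ x, f x = b ∧ s = fbsAt f x}

/-- Certificate complexity of `f` at `x`. -/
noncomputable def CAt (f : (I → Bool) → Bool) (x : I → Bool) : ℕ :=
  sInf {k | ∃ S : Finset I, (∀ B, IsBlock f x B → (S ∩ B).Nonempty) ∧ k = S.card}

/-- Certificate complexity of `f`. -/
noncomputable def Cm (f : (I → Bool) → Bool) : ℕ :=
  sSup {k | ∃ x, k = CAt f x}

/-- `b`-certificate complexity of `f`. -/
noncomputable def Cb (f : (I → Bool) → Bool) (b : Bool) : ℕ :=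
  sSup {k | ∃ x, f x = b ∧ k = CAt f x}

/-- Fractional certificate complexity of `f` at `x`. -/
noncomputable def fCAt (f : (I → Bool) → Bool) (x : I → Bool) : ℝ :=
  sInf {s | ∃ w : I → ℝ, (∀ i, 0 ≤ w i ∧ w i ≤ 1) ∧
    (∀ B, IsBlock f x B → 1 ≤ ∑ i ∈ B, w i) ∧ s = ∑ i, w i}

/-- Fractional certificate complexity of `f`. -/
noncomputable def fC (f : (I → Bool) → Bool) : ℝ :=
  sSup {s | ∃ x, s = fCAt f x}

/-- Composition `f ∘ g` of boolean functions. -/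
def comp {J : Type*} [Fintype J] [DecidableEq J]
    (f : (I → Bool) → Bool) (g : (J → Bool) → Bool) :
    ((I × J) → Bool) → Bool :=
  fun x => f (fun i => g (fun j => x (i, j)))

/-- `k`-fold iterated composition `f^(k)` of an `n`-variate boolean function; the
variables of `f^(k)` are indexed by strings in `Fin k → Fin n`.  `f^(0)` is the
univariate identity function. -/
def iter {n : ℕ} (f : (Fin n → Bool) → Bool) :
    (k : ℕ) → ((Fin k → Fin n) → Bool) → Bool
  | 0, x => x (fun i => i.elim0)
  | k + 1, x => f (fun i => iter f k (fun s => x (Fin.cons i s)))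

/-- Spectral radius of a real square matrix: the maximum of `|μ|` over the complex
eigenvalues `μ` of the matrix. -/
noncomputable def specRad {m : Type*} [Fintype m] [DecidableEq m]
    (A : Matrix m m ℝ) : ℝ :=
  sSup {r | ∃ μ : ℂ, μ ∈ spectrum ℂ (A.map Complex.ofReal) ∧ r = ‖μ‖}

end BS

namespace BS

open Finset Matrix

section ComplexityMeasures

variable {I : Type*} [DecidableEq I] {f : (I → Bool) → Bool} {x : I → Bool}

@[simp]
lemma flipSet_empty (x : I → Bool) : flipSet x ∅ = x := by
  ext i
  simp [flipSet]

lemma hammingDist_flipSet [Fintype I] (x : I → Bool) (B : Finset I) :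
    hammingDist x (flipSet x B) = #B := by
  unfold hammingDist
  congr 1
  ext i
  by_cases hi : i ∈ B <;> simp [flipSet, hi]

lemma IsBlock.nonempty {B : Finset I} (h : IsBlock f x B) : B.Nonempty := by
  rw [Finset.nonempty_iff_ne_empty]
  rintro rfl
  exact h (by rw [flipSet_empty])

variable [Fintype I]

lemma sum_le_sum_of_packing_of_cover (P : Finset I → Prop) {lam : Finset I → ℝ} {w : I → ℝ}
    (hlam0 : ∀ B, 0 ≤ lam B) (hlamP : ∀ B, ¬ P B → lam B = 0)
    (hpack : ∀ i, ∑ B ∈ univ.filter (fun B : Finset I => i ∈ B), lam B ≤ 1)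
    (hw0 : ∀ i, 0 ≤ w i) (hcover : ∀ B, P B → 1 ≤ ∑ i ∈ B, w i) :
    ∑ B, lam B ≤ ∑ i, w i :=
  calc ∑ B, lam B ≤ ∑ B, lam B * ∑ i ∈ B, w i := by
        refine sum_le_sum fun B _ => ?_
        by_cases hB : P B
        · exact le_mul_of_one_le_right (hlam0 B) (hcover B hB)
        · simp [hlamP B hB]
    _ = ∑ i, (∑ B ∈ univ.filter (fun B : Finset I => i ∈ B), lam B) * w i := by
        simp_rw [mul_sum, sum_mul, sum_filter]
        rw [sum_comm]
        exact sum_congr rfl fun B _ => by rw [← sum_filter, filter_mem_eq_inter, univ_inter]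
    _ ≤ ∑ i, w i := sum_le_sum fun i _ => mul_le_of_le_one_left (hw0 i) (hpack i)

lemma fbsAt_le_sum {w : I → ℝ} (hw0 : ∀ i, 0 ≤ w i)
    (hcover : ∀ B, IsBlock f x B → 1 ≤ ∑ i ∈ B, w i) : fbsAt f x ≤ ∑ i, w i := by
  refine Real.sSup_le ?_ (sum_nonneg fun i _ => hw0 i)
  rintro _ ⟨lam, hlam0, hlamP, hpack, rfl⟩
  exact sum_le_sum_of_packing_of_cover _ hlam0 hlamP hpack hw0 hcover

lemma sum_le_fbsAt {lam : Finset I → ℝ} (hlam0 : ∀ B, 0 ≤ lam B)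
    (hlamP : ∀ B, ¬ IsBlock f x B → lam B = 0)
    (hpack : ∀ i, ∑ B ∈ univ.filter (fun B : Finset I => i ∈ B), lam B ≤ 1) :
    ∑ B, lam B ≤ fbsAt f x := by
  refine le_csSup ⟨∑ _ : I, (1 : ℝ), ?_⟩ ⟨lam, hlam0, hlamP, hpack, rfl⟩
  rintro _ ⟨lam', hlam0', hlamP', hpack', rfl⟩
  exact sum_le_sum_of_packing_of_cover _ hlam0' hlamP' hpack' (fun _ => zero_le_one)
    fun B hB => by simpa using hB.nonempty.card_pos

lemma fbsAt_le_card : fbsAt f x ≤ Fintype.card I := by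
  simpa using fbsAt_le_sum (w := 1) (fun _ => zero_le_one)
    fun B hB => by simpa using hB.nonempty.card_pos

lemma natCast_le_fbsAt {k : ℕ} (B : Fin k → Finset I) (hB : ∀ t, IsBlock f x (B t))
    (hdisj : ∀ t t', t ≠ t' → Disjoint (B t) (B t')) : (k : ℝ) ≤ fbsAt f x := by
  have hsum (S : Finset (Finset I)) :
      ∑ B' ∈ S, ∑ t, (if B t = B' then 1 else 0 : ℝ) = #{t | B t ∈ S} := by
    rw [sum_comm, card_filter, Nat.cast_sum]
    simp
  calc (k : ℝ) = ∑ B', ∑ t, (if B t = B' then 1 else 0 : ℝ) := by rw [hsum]; simp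
    _ ≤ fbsAt f x := by
      refine sum_le_fbsAt (fun _ => sum_nonneg fun _ _ => by positivity) (fun B' hB' => ?_)
        fun i => ?_
      · exact sum_eq_zero fun t _ => if_neg fun h : B t = B' => hB' (h ▸ hB t)
      · rw [hsum, Nat.cast_le_one, card_le_one]
        simp only [mem_filter, mem_univ, true_and]
        intro t ht t' ht'
        by_contra hne
        exact disjoint_left.mp (hdisj t t' hne) ht ht'

lemma fbsAt_nonneg : 0 ≤ fbsAt f x := by
  simpa using natCast_le_fbsAt (f := f) (x := x) Fin.elim0 (fun t => t.elim0) (fun t => t.elim0)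

lemma bsAt_le_fbsAt : (bsAt f x : ℝ) ≤ fbsAt f x := by
  have : bsAt f x ≤ ⌊fbsAt f x⌋₊ :=
    csSup_le ⟨0, Fin.elim0, fun t => t.elim0, fun t => t.elim0⟩
      fun _ ⟨B, hB, hdisj⟩ => Nat.le_floor (natCast_le_fbsAt B hB hdisj)
  exact (Nat.cast_le.mpr this).trans (Nat.floor_le fbsAt_nonneg)

lemma fbsAt_le_fbs : fbsAt f x ≤ fbs f :=
  le_csSup ⟨Fintype.card I, by rintro _ ⟨y, rfl⟩; exact fbsAt_le_card⟩ ⟨x, rfl⟩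

lemma bs_le_fbs : (bs f : ℝ) ≤ fbs f := by
  have : bs f ≤ ⌊fbs f⌋₊ :=
    csSup_le ⟨_, default, rfl⟩ fun _ ⟨y, hy⟩ =>
      hy ▸ Nat.le_floor (bsAt_le_fbsAt.trans fbsAt_le_fbs)
  exact (Nat.cast_le.mpr this).trans
    (Nat.floor_le (fbsAt_nonneg.trans (fbsAt_le_fbs (x := default))))

lemma fbs_le {c : ℝ} (h : ∀ x, fbsAt f x ≤ c) : fbs f ≤ c :=
  Real.sSup_le (by rintro _ ⟨x, rfl⟩; exact h x) (fbsAt_nonneg.trans (h default))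

lemma le_CAt {m : ℕ} (h : ∀ S : Finset I, (∀ B, IsBlock f x B → (S ∩ B).Nonempty) → m ≤ #S) :
    m ≤ CAt f x :=
  le_csInf ⟨_, univ, fun _ hB => by simpa using hB.nonempty, rfl⟩
    (by rintro _ ⟨S, hS, rfl⟩; exact h S hS)

lemma CAt_le_Cm : CAt f x ≤ Cm f := by
  refine le_csSup ⟨Fintype.card I, ?_⟩ ⟨x, rfl⟩
  rintro _ ⟨y, rfl⟩
  exact Nat.sInf_le ⟨univ, fun _ hB => by simpa using hB.nonempty, card_univ.symm⟩

end ComplexityMeasures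

section Characters

variable {ι κ : Type*} [Fintype ι] [DecidableEq ι] [Fintype κ]

def zmodTwoSign (a : ZMod 2) : ℤ := if a = 0 then 1 else -1

lemma zmodTwoSign_add_one : ∀ a : ZMod 2, zmodTwoSign (a + 1) = -zmodTwoSign a := by decide

lemma sum_zmodTwoSign_dotProduct_eq_zero {s : Finset (ι → ZMod 2)} {b : ι → ZMod 2} {j : ι}
    (hb : b j ≠ 0) (hs : ∀ y ∈ s, y + Pi.single j 1 ∈ s) :
    ∑ y ∈ s, zmodTwoSign (b ⬝ᵥ y) = 0 := by
  have hbj : b j = 1 := by generalize b j = a at hb; revert a; decide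
  refine sum_involution (fun y _ => y + Pi.single j 1) (fun y _ => ?_) (fun y _ _ => ?_) hs
    fun y _ => ?_
  · rw [dotProduct_add, dotProduct_single, hbj, mul_one, zmodTwoSign_add_one, add_neg_cancel]
  · simp
  · ext i
    rw [Pi.add_apply, Pi.add_apply, add_assoc, CharTwo.add_self_eq_zero, add_zero]

lemma sum_zmodTwoSign_dotProduct_eq_zero_of_ne_zero {w : ι → ZMod 2} (hw : w ≠ 0) :
    ∑ u, zmodTwoSign (u ⬝ᵥ w) = 0 := by
  obtain ⟨j, hj⟩ := Function.ne_iff.mp hw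
  simp_rw [dotProduct_comm _ w]
  exact sum_zmodTwoSign_dotProduct_eq_zero hj fun _ _ => mem_univ _

/-- Sum the characters `y ↦ (-1)^(u ⬝ᵥ H y)` over all `u` and over the set `P` of vectors `y` with
pattern `p` on `T`. Each `y ∉ ker H` contributes `0`; but summing over `y` first, only `u = 0`
contributes, because `u ᵥ* H` has a nonzero coordinate outside `T`. So the total is `#P ≠ 0`. -/
theorem exists_mulVec_eq_zero_eqOn [DecidableEq κ] {H : Matrix κ ι (ZMod 2)} {T : Finset ι}
    (hH : ∀ u, u ≠ 0 → #T < hammingNorm (u ᵥ* H)) (p : ι → ZMod 2) :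
    ∃ y, H *ᵥ y = 0 ∧ ∀ j ∈ T, y j = p j := by
  set P := univ.filter fun y : ι → ZMod 2 => ∀ j ∈ T, y j = p j
  have hrow (u : κ → ZMod 2) (hu : u ≠ 0) : ∑ y ∈ P, zmodTwoSign ((u ᵥ* H) ⬝ᵥ y) = 0 := by
    obtain ⟨j, hj, hjT⟩ := exists_mem_notMem_of_card_lt_card (hH u hu)
    refine sum_zmodTwoSign_dotProduct_eq_zero (mem_filter.mp hj).2 fun y hy => ?_
    simp only [P, mem_filter, mem_univ, true_and] at hy ⊢
    intro i hi
    rw [Pi.add_apply, Pi.single_eq_of_ne (ne_of_mem_of_not_mem hi hjT), add_zero, hy i hi]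
  have htotal : ∑ y ∈ P, ∑ u, zmodTwoSign (u ⬝ᵥ H *ᵥ y) = #P := by
    simp_rw [dotProduct_mulVec]
    rw [sum_comm, Fintype.sum_eq_single 0 hrow]
    simp [zmodTwoSign]
  have hpP : p ∈ P := mem_filter.mpr ⟨mem_univ p, fun _ _ => rfl⟩
  obtain ⟨y, hyP, hy⟩ :=
    exists_ne_zero_of_sum_ne_zero (htotal.trans_ne (Nat.cast_ne_zero.mpr (card_ne_zero_of_mem hpP)))
  refine ⟨y, ?_, (mem_filter.mp hyP).2⟩
  by_contra hne
  exact hy (sum_zmodTwoSign_dotProduct_eq_zero_of_ne_zero hne)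

end Characters

lemma card_fiber_mul_card_of_surjective {G H : Type*} [AddGroup G] [Fintype G] [AddGroup H]
    [Fintype H] [DecidableEq H] (φ : G →+ H) (hφ : Function.Surjective φ) (h : H) :
    #{g | φ g = h} * Fintype.card H = Fintype.card G := by
  calc #{g | φ g = h} * Fintype.card H = ∑ h', #{g | φ g = h'} := by
        rw [sum_congr rfl fun h' _ => AddMonoidHom.card_fiber_eq_of_mem_range φ (hφ h') (hφ h),
          sum_const, card_univ, smul_eq_mul, mul_comm]
    _ = Fintype.card G := (card_eq_sum_card_fiberwise fun _ _ => mem_univ _).symm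

section RandomMatrix

variable {K ι κ : Type*} [Field K] [Fintype K] [DecidableEq K] [Fintype ι] [DecidableEq ι]
  [Fintype κ] [DecidableEq κ]

lemma card_mulVec_eq_zero_mul_card {v : ι → K} (hv : v ≠ 0) :
    #{M : Matrix κ ι K | M *ᵥ v = 0} * Fintype.card (κ → K) = Fintype.card (Matrix κ ι K) := by
  obtain ⟨j, hj : v j ≠ 0⟩ := Function.ne_iff.mp hv
  refine card_fiber_mul_card_of_surjective (AddMonoidHom.mk' (· *ᵥ v) fun A B => add_mulVec A B v)
    (fun w => ⟨vecMulVec w (Pi.single j (v j)⁻¹), ?_⟩) 0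
  simp [vecMulVec_mulVec, hj]

lemma card_vecMul_eq_mul_card {u : κ → K} (hu : u ≠ 0) (w : ι → K) :
    #{M : Matrix κ ι K | u ᵥ* M = w} * Fintype.card (ι → K) = Fintype.card (Matrix κ ι K) := by
  obtain ⟨i, hi : u i ≠ 0⟩ := Function.ne_iff.mp hu
  refine card_fiber_mul_card_of_surjective (AddMonoidHom.mk' (u ᵥ* ·) fun A B => vecMul_add A B u)
    (fun w => ⟨vecMulVec (Pi.single i (u i)⁻¹) w, ?_⟩) w
  simp [vecMul_vecMulVec, hi]

lemma card_vecMul_mem_mul_card {u : κ → K} (hu : u ≠ 0) (S : Finset (ι → K)) :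
    #{M : Matrix κ ι K | u ᵥ* M ∈ S} * Fintype.card (ι → K) =
      #S * Fintype.card (Matrix κ ι K) := by
  rw [card_eq_sum_card_fiberwise (s := {M : Matrix κ ι K | u ᵥ* M ∈ S}) (f := (u ᵥ* ·)) (t := S)
      fun M hM => (mem_filter.mp hM).2,
    sum_mul, sum_const_nat fun w hw => ?_]
  rw [filter_filter, ← card_vecMul_eq_mul_card hu w]
  congr 2
  ext M
  simp +contextual [hw]

lemma card_biUnion_mulVec_eq_zero_mul_le (S : Finset (ι → K)) :
    #((S.filter (· ≠ 0)).biUnion fun v => {M : Matrix κ ι K | M *ᵥ v = 0}) *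
      Fintype.card (κ → K) ≤ #S * Fintype.card (Matrix κ ι K) :=
  calc _ ≤ (∑ v ∈ S.filter (· ≠ 0), #{M : Matrix κ ι K | M *ᵥ v = 0}) * Fintype.card (κ → K) :=
        Nat.mul_le_mul_right _ card_biUnion_le
    _ = #(S.filter (· ≠ 0)) * Fintype.card (Matrix κ ι K) := by
        rw [sum_mul, sum_const_nat fun v hv => card_mulVec_eq_zero_mul_card (mem_filter.mp hv).2]
    _ ≤ #S * Fintype.card (Matrix κ ι K) := Nat.mul_le_mul_right _ (card_filter_le _ _)

lemma card_biUnion_vecMul_mem_mul_le (hcard : Fintype.card (κ → K) ^ 2 ≤ Fintype.card (ι → K))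
    (S : Finset (ι → K)) :
    #((univ.filter (· ≠ 0)).biUnion fun u : κ → K => {M : Matrix κ ι K | u ᵥ* M ∈ S}) *
      Fintype.card (κ → K) ≤ #S * Fintype.card (Matrix κ ι K) := by
  refine Nat.le_of_mul_le_mul_right (c := Fintype.card (κ → K)) ?_ Fintype.card_pos
  calc _ ≤ (∑ u ∈ univ.filter (· ≠ 0), #{M : Matrix κ ι K | u ᵥ* M ∈ S}) *
          Fintype.card (κ → K) ^ 2 := by
        rw [mul_assoc, ← sq]
        exact Nat.mul_le_mul_right _ card_biUnion_le
    _ ≤ (∑ u ∈ univ.filter (· ≠ 0), #{M : Matrix κ ι K | u ᵥ* M ∈ S}) *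
          Fintype.card (ι → K) := Nat.mul_le_mul_left _ hcard
    _ = #(univ.filter fun u : κ → K => u ≠ 0) * (#S * Fintype.card (Matrix κ ι K)) := by
        rw [sum_mul, sum_const_nat fun u hu => card_vecMul_mem_mul_card (mem_filter.mp hu).2 S]
    _ ≤ #S * Fintype.card (Matrix κ ι K) * Fintype.card (κ → K) := by
        rw [mul_comm]
        exact Nat.mul_le_mul_left _ ((card_filter_le _ _).trans_eq card_univ)

/-- Union bound over the Hamming ball `L` of radius `t`: for `H` uniformly random, `ker H` meets
`L \ {0}` with probability `≤ #L / q^k`, and the row space does so with probability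
`≤ q^k #L / q^n ≤ #L / q^k`. -/
theorem exists_matrix_forall_lt_hammingNorm {t : ℕ}
    (hcard : Fintype.card (κ → K) ^ 2 ≤ Fintype.card (ι → K))
    (hball : 2 * #{v : ι → K | hammingNorm v ≤ t} < Fintype.card (κ → K)) :
    ∃ H : Matrix κ ι K, (∀ v, v ≠ 0 → H *ᵥ v = 0 → t < hammingNorm v) ∧
      ∀ u, u ≠ 0 → t < hammingNorm (u ᵥ* H) := by
  set L := univ.filter fun v : ι → K => hammingNorm v ≤ t
  have hbad : #(((L.filter (· ≠ 0)).biUnion fun v => {M : Matrix κ ι K | M *ᵥ v = 0}) ∪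
      (univ.filter (· ≠ 0)).biUnion fun u : κ → K => {M : Matrix κ ι K | u ᵥ* M ∈ L}) <
      #(univ : Finset (Matrix κ ι K)) := by
    refine Nat.lt_of_mul_lt_mul_right (a := Fintype.card (κ → K)) ?_
    calc _ ≤ (#_ + #_) * Fintype.card (κ → K) := Nat.mul_le_mul_right _ (card_union_le _ _)
      _ ≤ 2 * #L * Fintype.card (Matrix κ ι K) := by
          have := card_biUnion_mulVec_eq_zero_mul_le (κ := κ) L
          have := card_biUnion_vecMul_mem_mul_le hcard L
          rw [add_mul]
          linarith
      _ < Fintype.card (κ → K) * Fintype.card (Matrix κ ι K) :=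
          Nat.mul_lt_mul_of_pos_right hball Fintype.card_pos
      _ = #univ * Fintype.card (κ → K) := by rw [card_univ, mul_comm]
  obtain ⟨H, -, hH⟩ := exists_mem_notMem_of_card_lt_card hbad
  simp only [mem_union, mem_biUnion, mem_filter, mem_univ, true_and, L, not_or, not_exists,
    not_and, not_le] at hH
  exact ⟨H, fun v hv hHv => lt_of_not_ge fun h => hH.1 v ⟨h, hv⟩ hHv, hH.2⟩

end RandomMatrix

section HammingBall

variable {ι α : Type*} [Fintype ι] [DecidableEq ι] [Fintype α] [DecidableEq α] [Zero α]

lemma sum_pow_card_filter_eq_zero (a : ℕ) :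
    ∑ v : ι → α, a ^ #{j | v j = 0} = (∑ b : α, if b = 0 then a else 1) ^ Fintype.card ι := by
  rw [← card_univ, ← prod_const, Fintype.prod_sum]
  refine sum_congr rfl fun v _ => ?_
  rw [prod_ite, prod_const, prod_const_one, mul_one]

lemma card_hammingBall_mul_pow_le (t : ℕ) {a : ℕ} (ha : 1 ≤ a) :
    #{v : ι → α | hammingNorm v ≤ t} * a ^ (Fintype.card ι - t) ≤
      (∑ b : α, if b = 0 then a else 1) ^ Fintype.card ι := by
  rw [← sum_pow_card_filter_eq_zero, ← smul_eq_mul, ← sum_const]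
  refine (sum_le_sum fun v hv => Nat.pow_le_pow_right ha ?_).trans
    (sum_le_sum_of_subset_of_nonneg (filter_subset _ _) fun _ _ _ => Nat.zero_le _)
  have := card_filter_add_card_filter_not (s := univ) fun j => v j = 0
  rw [card_univ] at this
  have hv : hammingNorm v ≤ t := (mem_filter.mp hv).2
  simp only [hammingNorm, ne_eq] at hv
  omega

end HammingBall

lemma two_mul_five_pow_lt {n : ℕ} (hn : 128 ≤ n) : 2 * 5 ^ n < 2 ^ (n / 2) * 4 ^ (n - n / 128) :=
  calc 2 * 5 ^ n ≤ 2 * 125 ^ (n / 3 + 1) := by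
        rw [show 125 = 5 ^ 3 by norm_num, ← pow_mul]
        exact Nat.mul_le_mul_left _ (Nat.pow_le_pow_right (by norm_num) (by omega))
    _ < 2 * 128 ^ (n / 3 + 1) := by gcongr; norm_num
    _ = 2 ^ (7 * (n / 3 + 1) + 1) := by rw [pow_succ 2, pow_mul]; norm_num [mul_comm]
    _ ≤ 2 ^ (n / 2 + 2 * (n - n / 128)) := Nat.pow_le_pow_right (by norm_num) (by omega)
    _ = 2 ^ (n / 2) * 4 ^ (n - n / 128) := by rw [pow_add, pow_mul]; norm_num

lemma two_mul_card_hammingBall_lt {n : ℕ} (hn : 128 ≤ n) :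
    2 * #{v : Fin n → ZMod 2 | hammingNorm v ≤ n / 128} < 2 ^ (n / 2) := by
  have hball :=
    card_hammingBall_mul_pow_le (ι := Fin n) (α := ZMod 2) (n / 128) (a := 4) (by norm_num)
  simp only [Fintype.card_fin] at hball
  refine Nat.lt_of_mul_lt_mul_right (a := 4 ^ (n - n / 128)) ?_
  calc _ ≤ 2 * 5 ^ n := by rw [mul_assoc]; exact Nat.mul_le_mul_left 2 hball
    _ < _ := two_mul_five_pow_lt hn

section BinaryCode

variable {κ : Type*}

def IsUniversal (C : Finset (κ → Bool)) (t : ℕ) : Prop :=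
  ∀ T : Finset κ, #T ≤ t → ∀ p : κ → Bool, ∃ c ∈ C, ∀ j ∈ T, c j = p j

lemma IsUniversal.nonempty {C : Finset (κ → Bool)} {t : ℕ} (hC : IsUniversal C t) :
    C.Nonempty :=
  let ⟨c, hc, _⟩ := hC ∅ (Nat.zero_le t) fun _ => false
  ⟨c, hc⟩

variable [Fintype κ]

def MinDistGt (C : Finset (κ → Bool)) (d : ℕ) : Prop :=
  ∀ y ∈ C, ∀ z ∈ C, y ≠ z → d < hammingDist y z

variable [DecidableEq κ] {C : Finset (κ → Bool)} {d t : ℕ}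

lemma MinDistGt.exists_notMem [Nonempty κ] (hC : MinDistGt C d) (hd : 1 ≤ d)
    (hne : C.Nonempty) : ∃ z, z ∉ C := by
  obtain ⟨c, hc⟩ := hne
  obtain ⟨j⟩ := ‹Nonempty κ›
  refine ⟨flipSet c {j}, fun hz => ?_⟩
  have hcz := hammingDist_flipSet c {j}
  rw [card_singleton] at hcz
  have := hC c hc _ hz fun h => by simp [← h] at hcz
  omega

/-- `ZMod 2` is `Fin 2` by definition. -/
def boolEquivZModTwo : Bool ≃ ZMod 2 := finTwoEquiv.symm

variable {ι : Type*} [Fintype ι] {H : Matrix ι κ (ZMod 2)}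

def kerCode (H : Matrix ι κ (ZMod 2)) : Finset (κ → Bool) :=
  {y | H *ᵥ (boolEquivZModTwo ∘ y) = 0}

lemma minDistGt_kerCode (hH : ∀ v, v ≠ 0 → H *ᵥ v = 0 → d < hammingNorm v) :
    MinDistGt (kerCode H) d := by
  intro y hy z hz hyz
  simp only [kerCode, mem_filter, mem_univ, true_and] at hy hz
  have hinj := boolEquivZModTwo.injective
  rw [← hammingDist_comp (fun _ => boolEquivZModTwo) fun _ => hinj, hammingDist_eq_hammingNorm,
    neg_add_eq_sub]
  refine hH _ (sub_ne_zero.mpr fun h => hyz ?_) ?_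
  · exact funext fun j => hinj (congrFun h j).symm
  · rw [mulVec_sub]
    exact sub_eq_zero.mpr (hz.trans hy.symm)

lemma isUniversal_kerCode [DecidableEq ι]
    (hH : ∀ u, u ≠ 0 → t < hammingNorm (u ᵥ* H)) : IsUniversal (kerCode H) t := by
  intro T hT p
  obtain ⟨v, hv, hvp⟩ :=
    exists_mulVec_eq_zero_eqOn (fun u hu => hT.trans_lt (hH u hu)) (boolEquivZModTwo ∘ p)
  refine ⟨boolEquivZModTwo.symm ∘ v, ?_, fun j hj => ?_⟩
  · simpa [kerCode, Function.comp_def] using hv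
  · simp [hvp j hj]

end BinaryCode

theorem exists_minDistGt_isUniversal {n : ℕ} (hn : 128 ≤ n) :
    ∃ C : Finset (Fin n → Bool), MinDistGt C (n / 128) ∧ IsUniversal C (n / 128) := by
  obtain ⟨H, hker, hrow⟩ := exists_matrix_forall_lt_hammingNorm (K := ZMod 2) (κ := Fin (n / 2))
    (ι := Fin n) (t := n / 128) (by simp [← pow_mul, Nat.pow_le_pow_right, Nat.div_mul_le_self])
    (by simpa using two_mul_card_hammingBall_lt hn)
  exact ⟨kerCode H, minDistGt_kerCode hker, isUniversal_kerCode hrow⟩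

section RowWeight

variable {κ : Type*} [Fintype κ] {d : ℕ} {y c : κ → Bool}

/-- The weights on one row `y` of a fractional certificate at a rejected input, where `c` is a
codeword nearest to `y`. -/
noncomputable def rowWeight (d : ℕ) (y c : κ → Bool) (j : κ) : ℝ :=
  2 / (d + 1) + if y j ≠ c j then (hammingDist y c : ℝ)⁻¹ else 0

lemma rowWeight_nonneg (j : κ) : 0 ≤ rowWeight d y c j :=
  add_nonneg (by positivity) (by split_ifs <;> positivity)

lemma sum_rowWeight (hyc : y ≠ c) :
    ∑ j, rowWeight d y c j = 2 * Fintype.card κ / (d + 1) + 1 := by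
  unfold rowWeight
  rw [sum_add_distrib, sum_const, card_univ, nsmul_eq_mul, ← sum_filter,
    sum_const, nsmul_eq_mul, ← hammingDist,
    mul_inv_cancel₀ (Nat.cast_ne_zero.mpr (hammingDist_ne_zero.mpr hyc))]
  ring

/-- Changing `y` into a codeword `c'` flips every bit where they differ; these bits carry total
weight `≥ 1`, either through the `1/ρ` terms (if `c' = c`) or because `c'` is then at distance
`≥ (d+1)/2` from `y` by the triangle inequality. -/
lemma one_le_sum_rowWeight {c' : κ → Bool} (hyc : y ≠ c) (hd : c' ≠ c → d < hammingDist c c')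
    (hmin : hammingDist y c ≤ hammingDist y c') :
    1 ≤ ∑ j ∈ {j | y j ≠ c' j}, rowWeight d y c j := by
  rcases eq_or_ne c' c with rfl | hne
  · calc (1 : ℝ) = #{j | y j ≠ c' j} • (hammingDist y c' : ℝ)⁻¹ := by
          rw [nsmul_eq_mul, ← hammingDist,
            mul_inv_cancel₀ (Nat.cast_ne_zero.mpr (hammingDist_ne_zero.mpr hyc))]
      _ ≤ _ := card_nsmul_le_sum _ _ _ fun j hj =>
          le_add_of_nonneg_of_le (by positivity) (if_pos (mem_filter.mp hj).2).ge
  · have := hd hne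
    have := hammingDist_triangle c y c'
    rw [hammingDist_comm c y] at this
    calc (1 : ℝ) ≤ #{j | y j ≠ c' j} • (2 / (d + 1)) := by
          rw [nsmul_eq_mul, ← hammingDist, mul_div_assoc', le_div_iff₀ (by positivity), one_mul]
          exact_mod_cast (by omega : d + 1 ≤ hammingDist y c' * 2)
      _ ≤ _ := card_nsmul_le_sum _ _ _ fun j _ =>
          le_add_of_nonneg_right (by split_ifs <;> positivity)

end RowWeight

section AnyRowIn

variable {ι κ I : Type*} (e : ι × κ ≃ I)

def row (x : I → Bool) (i : ι) : κ → Bool := fun j => x (e (i, j))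

def rowEmbedding (i : ι) : κ ↪ I := (Function.Embedding.sectR i κ).trans e.toEmbedding

@[simp]
lemma rowEmbedding_apply (i : ι) (j : κ) : rowEmbedding e i j = e (i, j) := rfl

variable {e}

lemma row_const (z : κ → Bool) (i : ι) : row e (fun p => z (e.symm p).2) i = z := by
  ext j
  simp [row]

variable {x : I → Bool} {B : Finset I}

lemma row_flipSet_of_forall_notMem [DecidableEq I] {i : ι} (h : ∀ j, e (i, j) ∉ B) :
    row e (flipSet x B) i = row e x i :=
  funext fun j => if_neg (h j)

lemma row_flipSet_map [DecidableEq I] [DecidableEq κ] (D : Finset κ) (i : ι) :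
    row e (flipSet x (D.map (rowEmbedding e i))) i =
      fun j => if j ∈ D then !row e x i j else row e x i j := by
  ext j
  simp [row, flipSet]

lemma sum_le_sum_of_forall_row_mem {w : ι × κ → ℝ} (hw0 : ∀ q, 0 ≤ w q) {i : ι} {D : Finset κ}
    (hD : ∀ j ∈ D, e (i, j) ∈ B) : ∑ j ∈ D, w (i, j) ≤ ∑ p ∈ B, w (e.symm p) :=
  calc ∑ j ∈ D, w (i, j)
      = ∑ p ∈ D.map (rowEmbedding e i), w (e.symm p) := by
        simp [sum_map]
    _ ≤ ∑ p ∈ B, w (e.symm p) := by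
        refine sum_le_sum_of_subset_of_nonneg (fun p hp => ?_) fun _ _ _ => hw0 _
        obtain ⟨j, hj, rfl⟩ := mem_map.mp hp
        exact hD j hj

variable [Fintype ι] [Fintype κ] (e) (C : Finset (κ → Bool))

def anyRowIn (x : I → Bool) : Bool := decide (∃ i, row e x i ∈ C)

variable {e C}

lemma anyRowIn_eq_true_iff : anyRowIn e C x = true ↔ ∃ i, row e x i ∈ C := by
  simp [anyRowIn]

lemma anyRowIn_eq_false_iff : anyRowIn e C x = false ↔ ∀ i, row e x i ∉ C := by
  simp [anyRowIn]

variable [DecidableEq I]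

lemma IsBlock.exists_mem_of_row_mem {i : ι} (hx : row e x i ∈ C)
    (hB : IsBlock (anyRowIn e C) x B) : ∃ j, e (i, j) ∈ B := by
  by_contra! h
  refine hB ?_
  rw [anyRowIn_eq_true_iff.mpr ⟨i, hx⟩, anyRowIn_eq_true_iff]
  exact ⟨i, (row_flipSet_of_forall_notMem h).symm ▸ hx⟩

lemma IsBlock.exists_row_of_anyRowIn_eq_false (hx : anyRowIn e C x = false)
    (hB : IsBlock (anyRowIn e C) x B) :
    ∃ i, ∃ c ∈ C, ∀ j, row e x i j ≠ c j → e (i, j) ∈ B := by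
  have hflip : anyRowIn e C (flipSet x B) = true := by
    simpa [IsBlock, hx] using hB
  obtain ⟨i, hi⟩ := anyRowIn_eq_true_iff.mp hflip
  refine ⟨i, _, hi, fun j hj => ?_⟩
  by_contra hjB
  exact hj (if_neg hjB).symm

lemma lt_card_row_of_forall_inter_nonempty [DecidableEq κ] {t : ℕ} (hC : IsUniversal C t)
    {z : κ → Bool} (hz : z ∉ C) {S : Finset I}
    (hS : ∀ B, IsBlock (anyRowIn e C) (fun p => z (e.symm p).2) B → (S ∩ B).Nonempty) (i : ι) :
    t < #{j | e (i, j) ∈ S} := by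
  by_contra! h
  obtain ⟨c, hc, hcS⟩ := hC _ h z
  set B := ({j | z j ≠ c j} : Finset κ).map (rowEmbedding e i)
  have hrow : row e (flipSet (fun p => z (e.symm p).2) B) i = c := by
    ext j
    rw [row_flipSet_map, row_const]
    by_cases hj : z j = c j <;> simp_all [Bool.eq_not_iff]
  have hB : IsBlock (anyRowIn e C) (fun p => z (e.symm p).2) B := by
    rw [IsBlock, anyRowIn_eq_true_iff.mpr ⟨i, hrow ▸ hc⟩, ne_eq, eq_comm, Bool.not_eq_true,
      anyRowIn_eq_false_iff]
    intro i'
    rwa [row_const]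
  obtain ⟨p, hp⟩ := hS B hB
  obtain ⟨hpS, hpB⟩ := mem_inter.mp hp
  obtain ⟨j, hj, rfl⟩ := mem_map.mp hpB
  exact (mem_filter.mp hj).2 (hcS j (by simpa using hpS)).symm

lemma sum_card_row_eq_card (S : Finset I) : ∑ i, #{j | e (i, j) ∈ S} = #S :=
  calc ∑ i, #{j | e (i, j) ∈ S} = #{q | e q ∈ S} := by
        simp only [card_filter]
        exact (Fintype.sum_prod_type fun q : ι × κ => if e q ∈ S then 1 else 0).symm
    _ = #S := card_equiv e fun q => by simp

variable [Fintype I]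

lemma fbsAt_anyRowIn_le_of_row_mem [DecidableEq ι] {i : ι} (hx : row e x i ∈ C) :
    fbsAt (anyRowIn e C) x ≤ Fintype.card κ := by
  let w : ι × κ → ℝ := fun q => if q.1 = i then 1 else 0
  have hw0 (q : ι × κ) : 0 ≤ w q := by unfold w; split_ifs <;> norm_num
  refine (fbsAt_le_sum (w := fun p => w (e.symm p)) (fun p => hw0 _) fun B hB => ?_).trans_eq ?_
  · obtain ⟨j, hj⟩ := hB.exists_mem_of_row_mem hx
    calc (1 : ℝ) = ∑ j ∈ {j}, w (i, j) := by simp [w]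
      _ ≤ _ := sum_le_sum_of_forall_row_mem hw0 (by simpa using hj)
  · rw [e.symm.sum_comp w, Fintype.sum_prod_type,
      Fintype.sum_eq_single i fun i' hi' => by simp [w, hi']]
    simp [w]

lemma fbsAt_anyRowIn_le_of_eq_false {d : ℕ} (hne : C.Nonempty) (hC : MinDistGt C d)
    (hx : anyRowIn e C x = false) :
    fbsAt (anyRowIn e C) x ≤ Fintype.card ι * (2 * Fintype.card κ / (d + 1) + 1) := by
  choose c hcC hcmin using fun i => exists_min_image C (hammingDist (row e x i)) hne
  have hrowc (i : ι) : row e x i ≠ c i := fun h => anyRowIn_eq_false_iff.mp hx i (h ▸ hcC i)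
  let w : ι × κ → ℝ := fun q => rowWeight d (row e x q.1) (c q.1) q.2
  refine (fbsAt_le_sum (w := fun p => w (e.symm p)) (fun _ => rowWeight_nonneg _)
    fun B hB => ?_).trans_eq ?_
  · obtain ⟨i, c', hc', hc'B⟩ := hB.exists_row_of_anyRowIn_eq_false hx
    exact (one_le_sum_rowWeight (hrowc i) (fun h => hC _ (hcC i) _ hc' h.symm)
      (hcmin i c' hc')).trans
      (sum_le_sum_of_forall_row_mem (w := w) (fun _ => rowWeight_nonneg _)
        fun j hj => hc'B j (mem_filter.mp hj).2)
  · rw [e.symm.sum_comp w, Fintype.sum_prod_type]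
    simp [w, sum_rowWeight (hrowc _), mul_add]

lemma fbsAt_anyRowIn_le {d : ℕ} [DecidableEq ι] (hne : C.Nonempty) (hC : MinDistGt C d)
    (x : I → Bool) :
    fbsAt (anyRowIn e C) x ≤
      max (Fintype.card κ : ℝ) (Fintype.card ι * (2 * Fintype.card κ / (d + 1) + 1)) := by
  cases hx : anyRowIn e C x
  · exact le_max_of_le_right (fbsAt_anyRowIn_le_of_eq_false hne hC hx)
  · obtain ⟨i, hi⟩ := anyRowIn_eq_true_iff.mp hx
    exact le_max_of_le_left (fbsAt_anyRowIn_le_of_row_mem hi)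

lemma le_CAt_anyRowIn [DecidableEq κ] {t : ℕ} (hC : IsUniversal C t) {z : κ → Bool} (hz : z ∉ C) :
    Fintype.card ι * (t + 1) ≤ CAt (anyRowIn e C) (fun p => z (e.symm p).2) :=
  le_CAt fun S hS =>
    calc Fintype.card ι * (t + 1) = ∑ _i : ι, (t + 1) := by simp
      _ ≤ ∑ i, #{j | e (i, j) ∈ S} :=
          sum_le_sum fun i _ => lt_card_row_of_forall_inter_nonempty hC hz hS i
      _ = #S := sum_card_row_eq_card S

end AnyRowIn

end BS

open BS in
/-- There are constants `c₁, c₂ > 0` and `N` such that for every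
`n ≥ N` there is a boolean function `f` on `n²` variables with
`bs(f) ≤ bs*(f) ≤ c₁·n` and `C(f) ≥ c₂·n²`. -/
theorem quadratic_separation_C_bs :
    ∃ c₁ > (0 : ℝ), ∃ c₂ > (0 : ℝ), ∃ N : ℕ, ∀ n ≥ N,
      ∃ f : (Fin (n ^ 2) → Bool) → Bool,
        (bs f : ℝ) ≤ fbs f ∧ fbs f ≤ c₁ * n ∧ c₂ * (n : ℝ) ^ 2 ≤ (Cm f : ℝ) := by
  refine ⟨257, by norm_num, 1 / 128, by norm_num, 128, fun n hn => ?_⟩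
  obtain ⟨C, hdist, huniv⟩ := exists_minDistGt_isUniversal hn
  have : Nonempty (Fin n) := ⟨⟨0, by omega⟩⟩
  obtain ⟨z, hz⟩ := hdist.exists_notMem (by omega) huniv.nonempty
  let e : Fin n × Fin n ≃ Fin (n ^ 2) := finProdFinEquiv.trans (finCongr (sq n).symm)
  have hn128 : (n : ℝ) ≤ 128 * ((n / 128 : ℕ) + 1 : ℝ) := by
    exact_mod_cast (by omega : n ≤ 128 * (n / 128 + 1))
  have hCm := (Nat.cast_le (α := ℝ)).mpr ((le_CAt_anyRowIn (e := e) huniv hz).trans CAt_le_Cm)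
  refine ⟨anyRowIn e C, bs_le_fbs, fbs_le fun x => (fbsAt_anyRowIn_le huniv.nonempty hdist x).trans
    (max_le ?_ ?_), ?_⟩
  · simp only [Fintype.card_fin]
    nlinarith [(n.cast_nonneg : (0 : ℝ) ≤ n)]
  · have : 2 * (n : ℝ) / ((n / 128 : ℕ) + 1) ≤ 256 := by
      rw [div_le_iff₀ (by positivity)]
      linarith
    simp only [Fintype.card_fin]
    nlinarith [(n.cast_nonneg : (0 : ℝ) ≤ n)]
  · simp only [Fintype.card_fin] at hCm
    push_cast at hCm
    nlinarith [(n.cast_nonneg : (0 : ℝ) ≤ n)]
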